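/- Lower test-function estimate: let q > 0, α, β > −1, p > 1, and K(w,z) = (1 − z \overline{w})^{−(2+α)} on the unit disc. For holomorphic g on 𝔻 there is a constant c > 0 independent of w and g such that ∫_𝔻 |K(w,z)|^q |z g'(z)|^q (1−|z|²)^{q+β} dA(z) ≥ c (1−|w|²)^{q+(1−q)(2+α)+β−α} |w g'(w)|^q for all w ∈ 𝔻. -/

import Mathlib

/-!
The integrand is only estimated on the disc `D(w, (1 - |w|)/2)`, on which both `|1 - z w̄|` and
`1 - |z|²` are comparable to `1 - |w|²`. What remains is a sub-mean-value inequality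
`|f(w)|^q ρ² ≲ ∫_{D(w,ρ)} |f|^q` for the holomorphic function `f(z) = z g'(z)` and any `q > 0`.
For `q = 1` it is the circle mean-value property integrated in polar coordinates. For `q = θ ≤ 1`,
the case `q = 1` on discs of half the distance to the boundary shows that
`S = sup_{z ∈ D(c,r)} (r - |z - c|)^{2/θ} |f(z)|` satisfies `S ≤ K S^{1-θ} ∫ |f|^θ`, and absorbing
`S^{1-θ}` gives `S^θ ≤ K ∫ |f|^θ`. Finally `|f|^q = |f^n|^{q/n}` with `n ≥ q`.
-/

open MeasureTheory Metric Set Real ComplexConjugate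

section PolarIntegral

variable {E : Type*} [NormedAddCommGroup E] [NormedSpace ℝ E]

theorem circleMap_eq_add_polarCoord_symm (c : ℂ) (p : ℝ × ℝ) :
    circleMap c p.1 p.2 = c + Complex.polarCoord.symm p := by
  simp [circleMap, Complex.exp_mul_I]

theorem setIntegral_ball_eq_setIntegral_polar (F : ℂ → E) (c : ℂ) (r : ℝ) :
    ∫ z in ball c r, F z = ∫ p in Ioo 0 r ×ˢ Ioo (-π) π, p.1 • F (circleMap c p.1 p.2) := by
  have htarget : Ioo 0 r ×ˢ Ioo (-π) π ⊆ polarCoord.target := by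
    rw [polarCoord_target]
    exact prod_mono Ioo_subset_Ioi_self subset_rfl
  have hpolar : ∀ p ∈ polarCoord.target,
      p.1 • (ball 0 r).indicator (fun z => F (c + z)) (Complex.polarCoord.symm p) =
        (Ioo 0 r ×ˢ Ioo (-π) π).indicator (fun p => p.1 • F (circleMap c p.1 p.2)) p := by
    rintro ⟨ρ, θ⟩ ⟨hρ, hθ⟩
    have hρ' : (0 : ℝ) < ρ := hρ
    by_cases hρr : ρ < r
    · rw [indicator_of_mem, indicator_of_mem, circleMap_eq_add_polarCoord_symm]
      · exact ⟨⟨hρ', hρr⟩, hθ⟩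
      · simpa [Complex.norm_polarCoord_symm, abs_of_pos hρ'] using hρr
    · rw [indicator_of_notMem, indicator_of_notMem, smul_zero]
      · exact fun h => hρr h.1.2
      · simpa [Complex.norm_polarCoord_symm, abs_of_pos hρ'] using hρr
  calc ∫ z in ball c r, F z = ∫ z in ball 0 r, F (c + z) := by
        rw [← (measurePreserving_add_left volume c).setIntegral_preimage_emb
          (measurableEmbedding_addLeft c), preimage_add_left_ball, neg_add_cancel]
    _ = ∫ p in polarCoord.target,
          p.1 • (ball 0 r).indicator (fun z => F (c + z)) (Complex.polarCoord.symm p) := by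
        rw [Complex.integral_comp_polarCoord_symm, integral_indicator measurableSet_ball]
    _ = ∫ p in Ioo 0 r ×ˢ Ioo (-π) π, p.1 • F (circleMap c p.1 p.2) := by
        rw [setIntegral_congr_fun polarCoord.open_target.measurableSet hpolar,
          setIntegral_indicator (measurableSet_Ioo.prod measurableSet_Ioo),
          inter_eq_self_of_subset_right htarget]

theorem setIntegral_Ioo_circleMap (F : ℂ → E) (c : ℂ) (ρ : ℝ) :
    ∫ θ in Ioo (-π) π, F (circleMap c ρ θ) = (2 * π) • circleAverage F c ρ := by
  have hperiod : Function.Periodic (fun θ => F (circleMap c ρ θ)) (2 * π) :=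
    fun θ => by simp only [periodic_circleMap c ρ θ]
  have hshift := hperiod.intervalIntegral_add_eq (-π) 0
  rw [neg_add_eq_sub, two_mul, add_sub_cancel_right, zero_add, ← two_mul] at hshift
  rw [circleAverage_def, smul_inv_smul₀ two_pi_pos.ne', ← integral_Ioc_eq_integral_Ioo,
    ← intervalIntegral.integral_of_le (by linarith [pi_pos]), hshift]

theorem setIntegral_ball_eq_setIntegral_circleAverage {F : ℂ → E} {c : ℂ} {r : ℝ}
    (hF : ContinuousOn F (closedBall c r)) :
    ∫ z in ball c r, F z = ∫ ρ in Ioo 0 r, (2 * π * ρ) • circleAverage F c ρ := by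
  have hcont : ContinuousOn (fun p : ℝ × ℝ => p.1 • F (circleMap c p.1 p.2))
      (Icc 0 r ×ˢ Icc (-π) π) := by
    refine continuousOn_fst.smul (hF.comp (by fun_prop) ?_)
    rintro ⟨ρ, θ⟩ ⟨hρ, -⟩
    exact closedBall_subset_closedBall hρ.2 (circleMap_mem_closedBall c hρ.1 θ)
  have hint : IntegrableOn _ (Ioo 0 r ×ˢ Ioo (-π) π) :=
    (hcont.integrableOn_compact (isCompact_Icc.prod isCompact_Icc)).mono_set
      (prod_mono Ioo_subset_Icc_self Ioo_subset_Icc_self)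
  rw [setIntegral_ball_eq_setIntegral_polar, Measure.volume_eq_prod, setIntegral_prod _ hint]
  refine setIntegral_congr_fun measurableSet_Ioo fun ρ _ => ?_
  rw [integral_smul, setIntegral_Ioo_circleMap, smul_smul, mul_comm ρ]

end PolarIntegral

theorem rpow_one_sub_mul_le {θ x y S : ℝ} (hθ0 : 0 < θ) (hθ1 : θ ≤ 1) (hx : 0 ≤ x) (hy : 0 ≤ y)
    (h : y * x ≤ S) : y ^ (1 - θ) * x ≤ S ^ (1 - θ) * x ^ θ := by
  rcases hx.eq_or_lt with rfl | hx
  · simp [Real.zero_rpow hθ0.ne']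
  calc y ^ (1 - θ) * x = (y * x) ^ (1 - θ) * x ^ θ := by
        rw [Real.mul_rpow hy hx.le, mul_assoc, ← Real.rpow_add hx, sub_add_cancel, Real.rpow_one]
    _ ≤ S ^ (1 - θ) * x ^ θ := by gcongr

theorem rpow_le_of_le_mul_rpow_one_sub {θ S K : ℝ} (hθ : 0 < θ) (hS : 0 ≤ S) (hK : 0 ≤ K)
    (h : S ≤ K * S ^ (1 - θ)) : S ^ θ ≤ K := by
  rcases hS.eq_or_lt with rfl | hS
  · rwa [Real.zero_rpow hθ.ne']
  refine le_of_mul_le_mul_right ?_ (Real.rpow_pos_of_pos hS (1 - θ))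
  rwa [← Real.rpow_add hS, add_sub_cancel, Real.rpow_one]

section SubMeanValue

variable {f : ℂ → ℂ} {c : ℂ} {r : ℝ}

theorem norm_le_circleAverage_norm (hr : 0 ≤ r) (hf : DifferentiableOn ℂ f (closedBall c r)) :
    ‖f c‖ ≤ circleAverage (‖f ·‖) c r := by
  have hmean : circleAverage f c r = f c :=
    (hf.diffContOnCl_ball (by rw [abs_of_nonneg hr])).circleAverage
  rw [← hmean, circleAverage_def, circleAverage_def, norm_smul, smul_eq_mul,
    Real.norm_of_nonneg (by positivity)]
  gcongr
  exact intervalIntegral.norm_integral_le_integral_norm two_pi_pos.le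

theorem pi_mul_sq_mul_norm_le_setIntegral_norm (hr : 0 ≤ r)
    (hf : DifferentiableOn ℂ f (closedBall c r)) :
    π * r ^ 2 * ‖f c‖ ≤ ∫ z in ball c r, ‖f z‖ := by
  have hcont : ContinuousOn (‖f ·‖) (closedBall c r) := hf.continuousOn.norm
  have havg : ContinuousOn (circleAverage (‖f ·‖) c) (Icc 0 r) :=
    (hcont.mono fun z hz => by simpa [dist_eq_norm] using hz.2).circleAverage fun ρ hρ => hρ.1
  rw [setIntegral_ball_eq_setIntegral_circleAverage hcont]
  calc π * r ^ 2 * ‖f c‖ = ∫ ρ in Ioo 0 r, 2 * π * ρ * ‖f c‖ := by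
        rw [← integral_Ioc_eq_integral_Ioo, ← intervalIntegral.integral_of_le hr,
          intervalIntegral.integral_mul_const, intervalIntegral.integral_const_mul, integral_id]
        ring
    _ ≤ ∫ ρ in Ioo 0 r, (2 * π * ρ) • circleAverage (‖f ·‖) c ρ := by
        refine setIntegral_mono_on ?_ ?_ measurableSet_Ioo fun ρ hρ => ?_
        · exact (Continuous.integrableOn_Icc (by fun_prop)).mono_set Ioo_subset_Icc_self
        · exact ((continuousOn_const.mul continuousOn_id).smul havg).integrableOn_Icc.mono_set
            Ioo_subset_Icc_self
        · rw [smul_eq_mul]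
          gcongr
          · exact mul_nonneg two_pi_pos.le hρ.1.le
          · exact norm_le_circleAverage_norm hρ.1.le
              (hf.mono (closedBall_subset_closedBall hρ.2.le))

theorem pi_mul_rpow_mul_norm_le {θ S : ℝ} (hθ0 : 0 < θ) (hθ1 : θ ≤ 1) (hr : 0 ≤ r)
    (hf : DifferentiableOn ℂ f (closedBall c r))
    (hS : ∀ z ∈ ball c r, r ^ (2 / θ) * ‖f z‖ ≤ S) :
    π * r ^ (2 / θ) * ‖f c‖ ≤ S ^ (1 - θ) * ∫ z in ball c r, ‖f z‖ ^ θ := by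
  have hcont : ContinuousOn (‖f ·‖) (closedBall c r) := hf.continuousOn.norm
  have hint : IntegrableOn (‖f ·‖) (ball c r) :=
    (hcont.integrableOn_compact (isCompact_closedBall c r)).mono_set ball_subset_closedBall
  have hintθ : IntegrableOn (‖f ·‖ ^ θ) (ball c r) :=
    ((hcont.rpow_const fun _ _ => Or.inr hθ0.le).integrableOn_compact
      (isCompact_closedBall c r)).mono_set ball_subset_closedBall
  have hexp : (r ^ (2 / θ)) ^ (1 - θ) * r ^ 2 = r ^ (2 / θ) := by
    have : 2 / θ * (1 - θ) + 2 = 2 / θ := by field_simp; ring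
    rw [← Real.rpow_mul hr, ← Real.rpow_two, ← Real.rpow_add' hr (by rw [this]; positivity), this]
  calc π * r ^ (2 / θ) * ‖f c‖ = (r ^ (2 / θ)) ^ (1 - θ) * (π * r ^ 2 * ‖f c‖) := by
        linear_combination -(π * ‖f c‖) * hexp
    _ ≤ (r ^ (2 / θ)) ^ (1 - θ) * ∫ z in ball c r, ‖f z‖ := by
        gcongr; exact pi_mul_sq_mul_norm_le_setIntegral_norm hr hf
    _ = ∫ z in ball c r, (r ^ (2 / θ)) ^ (1 - θ) * ‖f z‖ := (integral_const_mul _ _).symm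
    _ ≤ ∫ z in ball c r, S ^ (1 - θ) * ‖f z‖ ^ θ :=
        setIntegral_mono_on (hint.const_mul _) (hintθ.const_mul _) measurableSet_ball
          fun z hz => rpow_one_sub_mul_le hθ0 hθ1 (norm_nonneg _) (by positivity) (hS z hz)
    _ = S ^ (1 - θ) * ∫ z in ball c r, ‖f z‖ ^ θ := integral_const_mul _ _

theorem sub_dist_rpow_mul_norm_le {θ S : ℝ} (hθ0 : 0 < θ) (hθ1 : θ ≤ 1)
    (hf : DifferentiableOn ℂ f (closedBall c r))
    (hS : ∀ z ∈ ball c r, (r - dist z c) ^ (2 / θ) * ‖f z‖ ≤ S) {z : ℂ} (hz : z ∈ ball c r) :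
    (r - dist z c) ^ (2 / θ) * ‖f z‖ ≤
      2 ^ (2 / θ) / π * (∫ ζ in ball c r, ‖f ζ‖ ^ θ) * S ^ (1 - θ) := by
  have hz' : dist z c < r := hz
  have hS0 : 0 ≤ S :=
    (mul_nonneg (Real.rpow_nonneg (by linarith) _) (norm_nonneg _)).trans (hS z hz)
  set ρ := (r - dist z c) / 2 with hρ_def
  have hρ : 0 < ρ := by linarith
  have hsub : closedBall z ρ ⊆ ball c r := fun ζ hζ => by
    have : dist ζ z ≤ ρ := hζ
    show dist ζ c < r
    linarith [dist_triangle ζ z c]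
  have hlocal : ∀ ζ ∈ ball z ρ, ρ ^ (2 / θ) * ‖f ζ‖ ≤ S := by
    intro ζ hζ
    refine le_trans ?_ (hS ζ (hsub (ball_subset_closedBall hζ)))
    have : dist ζ z < ρ := hζ
    have := dist_triangle ζ z c
    gcongr
    linarith
  have hJ : ∫ ζ in ball z ρ, ‖f ζ‖ ^ θ ≤ ∫ ζ in ball c r, ‖f ζ‖ ^ θ :=
    setIntegral_mono_set
      ((hf.continuousOn.norm.rpow_const fun _ _ => Or.inr hθ0.le).integrableOn_compact
        (isCompact_closedBall c r) |>.mono_set ball_subset_closedBall)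
      (ae_of_all _ fun _ => by positivity) (ball_subset_closedBall.trans hsub).eventuallyLE
  have hmean := pi_mul_rpow_mul_norm_le hθ0 hθ1 hρ.le
    (hf.mono (hsub.trans ball_subset_closedBall)) hlocal
  calc (r - dist z c) ^ (2 / θ) * ‖f z‖ = 2 ^ (2 / θ) / π * (π * ρ ^ (2 / θ) * ‖f z‖) := by
        rw [show r - dist z c = 2 * ρ by ring, Real.mul_rpow zero_le_two hρ.le]
        field_simp
    _ ≤ 2 ^ (2 / θ) / π * (S ^ (1 - θ) * ∫ ζ in ball c r, ‖f ζ‖ ^ θ) := by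
        gcongr 2 ^ (2 / θ) / π * ?_
        exact hmean.trans (mul_le_mul_of_nonneg_left hJ (Real.rpow_nonneg hS0 _))
    _ = 2 ^ (2 / θ) / π * (∫ ζ in ball c r, ‖f ζ‖ ^ θ) * S ^ (1 - θ) := by ring

theorem rpow_norm_mul_sq_le_of_le_one {θ : ℝ} (hθ0 : 0 < θ) (hθ1 : θ ≤ 1) (hr : 0 < r)
    (hf : DifferentiableOn ℂ f (closedBall c r)) :
    ‖f c‖ ^ θ * r ^ 2 ≤ 2 ^ (2 / θ) / π * ∫ z in ball c r, ‖f z‖ ^ θ := by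
  set W := (fun z => (r - dist z c) ^ (2 / θ) * ‖f z‖) '' ball c r
  obtain ⟨M, hM⟩ := (isCompact_closedBall c r).exists_bound_of_continuousOn hf.continuousOn
  have hbdd : BddAbove W := by
    refine ⟨r ^ (2 / θ) * M, ?_⟩
    rintro _ ⟨z, hz, rfl⟩
    have hz' : dist z c < r := hz
    dsimp only
    gcongr
    · linarith [dist_nonneg (x := z) (y := c)]
    · exact hM z (ball_subset_closedBall hz)
  have hle : ∀ z ∈ ball c r, (r - dist z c) ^ (2 / θ) * ‖f z‖ ≤ sSup W :=
    fun z hz => le_csSup hbdd ⟨z, hz, rfl⟩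
  have hc : r ^ (2 / θ) * ‖f c‖ ≤ sSup W := by simpa using hle c (mem_ball_self hr)
  have habsorb : sSup W ≤ 2 ^ (2 / θ) / π * (∫ z in ball c r, ‖f z‖ ^ θ) * sSup W ^ (1 - θ) :=
    csSup_le ⟨_, c, mem_ball_self hr, rfl⟩ fun _ ⟨z, hz, hW⟩ =>
      hW ▸ sub_dist_rpow_mul_norm_le hθ0 hθ1 hf hle hz
  calc ‖f c‖ ^ θ * r ^ 2 = (r ^ (2 / θ) * ‖f c‖) ^ θ := by
        rw [Real.mul_rpow (by positivity) (norm_nonneg _), ← Real.rpow_mul hr.le,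
          div_mul_cancel₀ _ hθ0.ne', Real.rpow_two, mul_comm]
    _ ≤ sSup W ^ θ := by gcongr
    _ ≤ 2 ^ (2 / θ) / π * ∫ z in ball c r, ‖f z‖ ^ θ :=
        rpow_le_of_le_mul_rpow_one_sub hθ0
          ((by positivity : (0 : ℝ) ≤ r ^ (2 / θ) * ‖f c‖).trans hc)
          (by positivity) habsorb

theorem exists_rpow_norm_mul_sq_le_setIntegral {q : ℝ} (hq : 0 < q) :
    ∃ C > 0, ∀ (f : ℂ → ℂ) (c : ℂ) (r : ℝ), 0 < r → DifferentiableOn ℂ f (closedBall c r) →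
      ‖f c‖ ^ q * r ^ 2 ≤ C * ∫ z in ball c r, ‖f z‖ ^ q := by
  set n := ⌈q⌉₊
  have hn : (0 : ℝ) < n := Nat.cast_pos.2 (Nat.ceil_pos.2 hq)
  set θ := q / n
  have hθ0 : 0 < θ := div_pos hq hn
  have hθ1 : θ ≤ 1 := (div_le_one hn).2 (Nat.le_ceil q)
  have hpow : ∀ (f : ℂ → ℂ) z, ‖f z ^ n‖ ^ θ = ‖f z‖ ^ q := fun f z => by
    rw [norm_pow, ← Real.rpow_natCast, ← Real.rpow_mul (norm_nonneg _), mul_div_cancel₀ _ hn.ne']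
  refine ⟨2 ^ (2 / θ) / π, by positivity, fun f c r hr hf => ?_⟩
  have := rpow_norm_mul_sq_le_of_le_one hθ0 hθ1 hr (hf.pow n)
  simpa only [Pi.pow_apply, hpow] using this

end SubMeanValue

theorem min_rpow_mul_rpow_le {a b u v s : ℝ} (ha : 0 < a) (hv : 0 < v) (hau : a * v ≤ u)
    (hub : u ≤ b * v) : min (a ^ s) (b ^ s) * v ^ s ≤ u ^ s := by
  have hb : 0 < b := pos_of_mul_pos_left ((mul_pos ha hv).trans_le (hau.trans hub)) hv.le
  rcases le_total 0 s with hs | hs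
  · calc min (a ^ s) (b ^ s) * v ^ s ≤ a ^ s * v ^ s := by gcongr; exact min_le_left _ _
      _ = (a * v) ^ s := (Real.mul_rpow ha.le hv.le).symm
      _ ≤ u ^ s := by gcongr
  · calc min (a ^ s) (b ^ s) * v ^ s ≤ b ^ s * v ^ s := by gcongr; exact min_le_right _ _
      _ = (b * v) ^ s := (Real.mul_rpow hb.le hv.le).symm
      _ ≤ u ^ s := Real.rpow_le_rpow_of_nonpos ((mul_pos ha hv).trans_le hau) hub hs

section UnitDisc

variable {w z : ℂ}

theorem closedBall_half_subset_ball_zero_one (hw : ‖w‖ < 1) :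
    closedBall w ((1 - ‖w‖) / 2) ⊆ ball 0 1 := fun z hz => by
  have hzw : ‖z - w‖ ≤ (1 - ‖w‖) / 2 := mem_closedBall_iff_norm.1 hz
  rw [mem_ball_zero_iff]
  linarith [norm_le_norm_add_norm_sub' z w]

theorem one_sub_sq_norm_mem_Icc (hw : ‖w‖ < 1) (hz : z ∈ ball w ((1 - ‖w‖) / 2)) :
    4⁻¹ * (1 - ‖w‖ ^ 2) ≤ 1 - ‖z‖ ^ 2 ∧ 1 - ‖z‖ ^ 2 ≤ 3 * (1 - ‖w‖ ^ 2) := by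
  rw [mem_ball, dist_eq_norm] at hz
  have hzw := norm_le_norm_add_norm_sub' z w
  have hwz := norm_le_norm_add_norm_sub z w
  have := norm_nonneg w
  constructor <;> nlinarith [norm_nonneg z]

theorem norm_one_sub_mul_conj_mem_Icc (hw : ‖w‖ < 1) (hz : z ∈ ball w ((1 - ‖w‖) / 2)) :
    4⁻¹ * (1 - ‖w‖ ^ 2) ≤ ‖1 - z * conj w‖ ∧ ‖1 - z * conj w‖ ≤ 3 * (1 - ‖w‖ ^ 2) := by
  rw [mem_ball, dist_eq_norm] at hz
  have hzw := norm_le_norm_add_norm_sub' z w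
  have := norm_nonneg w
  have hnorm_mul : ‖z * conj w‖ = ‖z‖ * ‖w‖ := by rw [norm_mul, Complex.norm_conj]
  constructor
  · have := norm_sub_norm_le 1 (z * conj w)
    rw [norm_one, hnorm_mul] at this
    nlinarith [norm_nonneg z]
  · have hsplit : 1 - z * conj w = (1 - ‖w‖ ^ 2 : ℝ) + (w - z) * conj w := by
      rw [sub_mul, Complex.mul_conj']; push_cast; ring
    have := norm_add_le ((1 - ‖w‖ ^ 2 : ℝ) : ℂ) ((w - z) * conj w)
    rw [← hsplit, Complex.norm_real, Real.norm_of_nonneg (by nlinarith), norm_mul,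
      Complex.norm_conj, norm_sub_rev w z] at this
    nlinarith

end UnitDisc

theorem exists_mul_rpow_le_rpow_norm_one_sub_mul_conj_mul_rpow (a b : ℝ) :
    ∃ m > 0, ∀ w z : ℂ, ‖w‖ < 1 → z ∈ ball w ((1 - ‖w‖) / 2) →
      m * (1 - ‖w‖ ^ 2) ^ (a + b) ≤ ‖1 - z * conj w‖ ^ a * (1 - ‖z‖ ^ 2) ^ b := by
  refine ⟨min (4⁻¹ ^ a) (3 ^ a) * min (4⁻¹ ^ b) (3 ^ b), by positivity, fun w z hw hz => ?_⟩
  have hv : 0 < 1 - ‖w‖ ^ 2 := by nlinarith [norm_nonneg w]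
  obtain ⟨hK₁, hK₂⟩ := norm_one_sub_mul_conj_mem_Icc hw hz
  obtain ⟨hW₁, hW₂⟩ := one_sub_sq_norm_mem_Icc hw hz
  rw [Real.rpow_add hv, mul_mul_mul_comm]
  exact mul_le_mul (min_rpow_mul_rpow_le (by norm_num) hv hK₁ hK₂)
    (min_rpow_mul_rpow_le (by norm_num) hv hW₁ hW₂) (by positivity) (by positivity)

theorem exists_mul_sq_mul_rpow_norm_le_setLIntegral {q : ℝ} (hq : 0 < q) :
    ∃ C > 0, ∀ f : ℂ → ℂ, DifferentiableOn ℂ f (ball 0 1) → ∀ w : ℂ, ‖w‖ < 1 →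
      ENNReal.ofReal (C * (1 - ‖w‖ ^ 2) ^ 2 * ‖f w‖ ^ q) ≤
        ∫⁻ z in ball w ((1 - ‖w‖) / 2), ENNReal.ofReal (‖f z‖ ^ q) := by
  obtain ⟨C, hC, hmean⟩ := exists_rpow_norm_mul_sq_le_setIntegral hq
  refine ⟨(16 * C)⁻¹, by positivity, fun f hf w hw => ?_⟩
  set ρ := (1 - ‖w‖) / 2 with hρ_def
  have hρ : 0 < ρ := half_pos (sub_pos.2 hw)
  have hsub := closedBall_half_subset_ball_zero_one hw
  have hint : IntegrableOn (fun z => ‖f z‖ ^ q) (ball w ρ) :=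
    (((hf.continuousOn.mono hsub).norm.rpow_const fun _ _ => Or.inr hq.le).integrableOn_compact
      (isCompact_closedBall w ρ)).mono_set ball_subset_closedBall
  have hvρ : (1 - ‖w‖ ^ 2) ^ 2 ≤ 16 * ρ ^ 2 := by
    have h4 : 1 - ‖w‖ ^ 2 ≤ 4 * ρ := by rw [hρ_def]; nlinarith [norm_nonneg w]
    nlinarith [pow_le_pow_left₀ (sub_nonneg.2 (pow_le_one₀ (norm_nonneg w) hw.le)) h4 2]
  rw [← ofReal_integral_eq_lintegral_ofReal hint (ae_of_all _ fun _ => by positivity)]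
  refine ENNReal.ofReal_le_ofReal ?_
  calc (16 * C)⁻¹ * (1 - ‖w‖ ^ 2) ^ 2 * ‖f w‖ ^ q
      ≤ (16 * C)⁻¹ * (16 * ρ ^ 2) * ‖f w‖ ^ q := by gcongr
    _ = C⁻¹ * (‖f w‖ ^ q * ρ ^ 2) := by field_simp
    _ ≤ C⁻¹ * (C * ∫ z in ball w ρ, ‖f z‖ ^ q) := by
        gcongr C⁻¹ * ?_
        exact hmean f w ρ hρ (hf.mono hsub)
    _ = ∫ z in ball w ρ, ‖f z‖ ^ q := inv_mul_cancel_left₀ hC.ne' _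

theorem stmt9_general (q α β : ℝ) (hq : 0 < q) :
    ∃ c : ℝ, 0 < c ∧
      ∀ (g : ℂ → ℂ), DifferentiableOn ℂ g (ball 0 1) →
        ∀ w ∈ ball (0:ℂ) 1,
          ENNReal.ofReal
              (c * (1 - ‖w‖ ^ 2) ^ (q + (1 - q) * (2 + α) + β - α) * ‖w * deriv g w‖ ^ q)
            ≤ ∫⁻ z in ball (0:ℂ) 1,
                ENNReal.ofReal
                  ((‖1 - z * (starRingEnd ℂ) w‖ ^ (-(2 + α))) ^ q *
                    ‖z * deriv g z‖ ^ q * (1 - ‖z‖ ^ 2) ^ (q + β)) := by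
  obtain ⟨C, hC, hmean⟩ := exists_mul_sq_mul_rpow_norm_le_setLIntegral hq
  obtain ⟨m, hm, hkernel⟩ :=
    exists_mul_rpow_le_rpow_norm_one_sub_mul_conj_mul_rpow (-(2 + α) * q) (q + β)
  refine ⟨m * C, by positivity, fun g hg w hw => ?_⟩
  rw [mem_ball_zero_iff] at hw
  have hf : DifferentiableOn ℂ (fun z => z * deriv g z) (ball 0 1) :=
    differentiableOn_id.mul (hg.analyticOnNhd isOpen_ball).deriv.differentiableOn
  have hv : 0 < 1 - ‖w‖ ^ 2 := sub_pos.2 (pow_lt_one₀ (norm_nonneg w) hw two_ne_zero)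
  set V := m * (1 - ‖w‖ ^ 2) ^ (-(2 + α) * q + (q + β))
  calc _ = ENNReal.ofReal V * ENNReal.ofReal (C * (1 - ‖w‖ ^ 2) ^ 2 * ‖w * deriv g w‖ ^ q) := by
        rw [← ENNReal.ofReal_mul (by positivity),
          show q + (1 - q) * (2 + α) + β - α = -(2 + α) * q + (q + β) + 2 by ring,
          Real.rpow_add hv, Real.rpow_two]
        simp only [V]
        ring_nf
    _ ≤ ENNReal.ofReal V *
          ∫⁻ z in ball w ((1 - ‖w‖) / 2), ENNReal.ofReal (‖z * deriv g z‖ ^ q) := by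
        gcongr
        exact hmean _ hf w hw
    _ = ∫⁻ z in ball w ((1 - ‖w‖) / 2), ENNReal.ofReal (V * ‖z * deriv g z‖ ^ q) := by
        rw [← lintegral_const_mul' _ _ ENNReal.ofReal_ne_top]
        simp_rw [ENNReal.ofReal_mul (by positivity : 0 ≤ V)]
    _ ≤ ∫⁻ z in ball w ((1 - ‖w‖) / 2), ENNReal.ofReal ((‖1 - z * conj w‖ ^ (-(2 + α))) ^ q *
          ‖z * deriv g z‖ ^ q * (1 - ‖z‖ ^ 2) ^ (q + β)) := by
        refine setLIntegral_mono' measurableSet_ball fun z hz => ENNReal.ofReal_le_ofReal ?_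
        rw [← Real.rpow_mul (norm_nonneg _), mul_right_comm _ (‖z * deriv g z‖ ^ q)]
        exact mul_le_mul_of_nonneg_right (hkernel w z hw hz) (by positivity)
    _ ≤ _ := lintegral_mono_set (ball_subset_closedBall.trans
        (closedBall_half_subset_ball_zero_one hw))

/-- Lower test-function estimate with the kernel `K(w,z) = (1 - z \overline{w})^{-(2+α)}`:
`∫_𝔻 |K(w,z)|^q |z g'(z)|^q (1-|z|²)^{q+β} dA(z)
  ≥ c (1-|w|²)^{q+(1-q)(2+α)+β-α} |w g'(w)|^q`. -/
theorem stmt9 (p q α β : ℝ) (hq : 0 < q) (hα : -1 < α) (hβ : -1 < β) (hp : 1 < p) :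
    ∃ c : ℝ, 0 < c ∧
      ∀ (g : ℂ → ℂ), DifferentiableOn ℂ g (ball 0 1) →
        ∀ w ∈ ball (0:ℂ) 1,
          ENNReal.ofReal
              (c * (1 - ‖w‖ ^ 2) ^ (q + (1 - q) * (2 + α) + β - α) * ‖w * deriv g w‖ ^ q)
            ≤ ∫⁻ z in ball (0:ℂ) 1,
                ENNReal.ofReal
                  ((‖1 - z * (starRingEnd ℂ) w‖ ^ (-(2 + α))) ^ q *
                    ‖z * deriv g z‖ ^ q * (1 - ‖z‖ ^ 2) ^ (q + β)) :=
  stmt9_general q α β hq
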